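/- Two continuous solutions x, y of the fractional Volterra equation with the same initial value x₀ and f uniformly L-Lipschitz in the state variable satisfy ‖x(t) − y(t)‖ = 0 for all t ∈ [0,T], provided LT^α/Γ(α+1) < 1 (uniqueness of solutions). -/

import Mathlib

/-!
Write `I^α g (t) = Γ(α)⁻¹ ∫₀ᵗ (t - s)^(α-1) g(s) ds` for the Riemann–Liouville integral. Since
`∫₀ᵗ (t - s)^(α-1) ds = t^α / α`, a bound `‖g‖ ≤ C` on `[0, t]` gives
`‖I^α g (t)‖ ≤ C t^α / Γ(α + 1)`. The difference of two solutions is `I^α` of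
`f(·, x) - f(·, y)`, which is bounded by `L M` with `M` the maximum of `‖x - y‖` on `[0, T]`;
hence `M ≤ (L T^α / Γ(α + 1)) M`, and the contraction condition forces `M = 0`.
-/

open Real MeasureTheory intervalIntegral

section RiemannLiouville

variable {E : Type*} [NormedAddCommGroup E] [NormedSpace ℝ E]

noncomputable def riemannLiouvilleIntegral (α : ℝ) (g : ℝ → E) (t : ℝ) : E :=
  (1 / Gamma α) • ∫ s in (0:ℝ)..t, (t - s) ^ (α - 1) • g s

lemma intervalIntegrable_sub_rpow {r : ℝ} (hr : -1 < r) (t a b : ℝ) :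
    IntervalIntegrable (fun s => (t - s) ^ r) volume a b := by
  simpa using (intervalIntegrable_rpow' (a := t - a) (b := t - b) hr).comp_sub_left t

lemma integral_sub_rpow {α : ℝ} (hα : 0 < α) (t : ℝ) :
    ∫ s in (0:ℝ)..t, (t - s) ^ (α - 1) = t ^ α / α := by
  rw [integral_comp_sub_left (fun u => u ^ (α - 1)) t, sub_self, sub_zero,
    integral_rpow (Or.inl (by linarith)), sub_add_cancel, zero_rpow hα.ne', sub_zero]

lemma riemannLiouvilleIntegral_sub {α : ℝ} (hα : 0 < α) {g h : ℝ → E} (hg : Continuous g)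
    (hh : Continuous h) (t : ℝ) :
    riemannLiouvilleIntegral α g t - riemannLiouvilleIntegral α h t =
      riemannLiouvilleIntegral α (g - h) t := by
  have hkernel := intervalIntegrable_sub_rpow (by linarith : -1 < α - 1) t 0 t
  rw [riemannLiouvilleIntegral, riemannLiouvilleIntegral, ← smul_sub, ← integral_sub
    (hkernel.smul_continuousOn hg.continuousOn) (hkernel.smul_continuousOn hh.continuousOn)]
  simp only [riemannLiouvilleIntegral, Pi.sub_apply, smul_sub]

lemma norm_riemannLiouvilleIntegral_le {α : ℝ} (hα : 0 < α) {g : ℝ → E} {t C : ℝ}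
    (ht : 0 ≤ t) (hg : ∀ s ∈ Set.Icc 0 t, ‖g s‖ ≤ C) :
    ‖riemannLiouvilleIntegral α g t‖ ≤ C * t ^ α / Gamma (α + 1) := by
  have hkernel := intervalIntegrable_sub_rpow (by linarith : -1 < α - 1) t 0 t
  have hintegral : ‖∫ s in (0:ℝ)..t, (t - s) ^ (α - 1) • g s‖ ≤ C * (t ^ α / α) := by
    calc ‖∫ s in (0:ℝ)..t, (t - s) ^ (α - 1) • g s‖
        ≤ ∫ s in (0:ℝ)..t, (t - s) ^ (α - 1) * C := by
          refine norm_integral_le_of_norm_le ht (ae_of_all _ fun s hs => ?_)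
            (hkernel.mul_const C)
          have hpow : 0 ≤ (t - s) ^ (α - 1) := rpow_nonneg (by linarith [hs.2]) _
          rw [norm_smul, norm_of_nonneg hpow]
          exact mul_le_mul_of_nonneg_left (hg s (Set.Ioc_subset_Icc_self hs)) hpow
      _ = C * (t ^ α / α) := by
          rw [intervalIntegral.integral_mul_const, integral_sub_rpow hα, mul_comm]
  have hΓ : 0 < Gamma α := Gamma_pos_of_pos hα
  rw [riemannLiouvilleIntegral, norm_smul, norm_of_nonneg (by positivity),
    Gamma_add_one hα.ne']
  calc 1 / Gamma α * ‖∫ s in (0:ℝ)..t, (t - s) ^ (α - 1) • g s‖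
      ≤ 1 / Gamma α * (C * (t ^ α / α)) := by gcongr
    _ = C * t ^ α / (α * Gamma α) := by field_simp

end RiemannLiouville

/-- Uniqueness of solutions of the fractional Volterra equation: two continuous solutions
with the same initial value coincide on `[0,T]` provided `L T^α / Γ(α+1) < 1`. -/
theorem volterra_uniqueness {n : ℕ} (α : ℝ) (hα : α ∈ Set.Ioo (0:ℝ) 1)
    (T L : ℝ) (hT : 0 < T) (hL : 0 ≤ L) (x₀ : EuclideanSpace ℝ (Fin n))
    (f : ℝ → EuclideanSpace ℝ (Fin n) → EuclideanSpace ℝ (Fin n))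
    (hf : Continuous fun p : ℝ × EuclideanSpace ℝ (Fin n) => f p.1 p.2)
    (hLip : ∀ s ∈ Set.Icc (0:ℝ) T, ∀ u v, ‖f s u - f s v‖ ≤ L * ‖u - v‖)
    (hcontr : L * T ^ α / Real.Gamma (α + 1) < 1)
    (x y : ℝ → EuclideanSpace ℝ (Fin n)) (hx : Continuous x) (hy : Continuous y)
    (hxeq : ∀ t ∈ Set.Icc (0:ℝ) T,
      x t = x₀ + (1 / Real.Gamma α) • ∫ s in (0:ℝ)..t, (t - s) ^ (α - 1) • f s (x s))
    (hyeq : ∀ t ∈ Set.Icc (0:ℝ) T,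
      y t = x₀ + (1 / Real.Gamma α) • ∫ s in (0:ℝ)..t, (t - s) ^ (α - 1) • f s (y s)) :
    ∀ t ∈ Set.Icc (0:ℝ) T, ‖x t - y t‖ = 0 := by
  obtain ⟨t₀, ht₀, hmax⟩ := isCompact_Icc.exists_isMaxOn (Set.nonempty_Icc.2 hT.le)
    (hx.sub hy).norm.continuousOn
  set M := ‖x t₀ - y t₀‖
  have hM : ∀ t ∈ Set.Icc 0 T, ‖x t - y t‖ ≤ M := fun t ht => hmax ht
  have hdiff : ∀ t ∈ Set.Icc 0 T, ‖x t - y t‖ ≤ L * M * t ^ α / Gamma (α + 1) := by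
    intro t ht
    have hfx : Continuous fun s => f s (x s) := hf.comp (continuous_id.prodMk hx)
    have hfy : Continuous fun s => f s (y s) := hf.comp (continuous_id.prodMk hy)
    have hsol : x t - y t = riemannLiouvilleIntegral α
        ((fun s => f s (x s)) - fun s => f s (y s)) t := by
      rw [← riemannLiouvilleIntegral_sub hα.1 hfx hfy, hxeq t ht, hyeq t ht,
        add_sub_add_left_eq_sub]
      rfl
    rw [hsol]
    refine norm_riemannLiouvilleIntegral_le hα.1 ht.1 fun s hs => ?_
    have hsT : s ∈ Set.Icc 0 T := ⟨hs.1, hs.2.trans ht.2⟩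
    exact (hLip s hsT _ _).trans (mul_le_mul_of_nonneg_left (hM s hsT) hL)
  have hMle : M ≤ L * T ^ α / Gamma (α + 1) * M :=
    calc M ≤ L * M * t₀ ^ α / Gamma (α + 1) := hdiff t₀ ht₀
      _ ≤ L * M * T ^ α / Gamma (α + 1) := by
          have hΓ := Gamma_pos_of_pos (by linarith [hα.1] : 0 < α + 1)
          have hpow := rpow_le_rpow ht₀.1 ht₀.2 hα.1.le
          gcongr
      _ = L * T ^ α / Gamma (α + 1) * M := by ring
  have hM0 : M = 0 := by nlinarith [norm_nonneg (x t₀ - y t₀)]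
  exact fun t ht => le_antisymm (hM0 ▸ hM t ht) (norm_nonneg _)
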